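/- arXiv:2402.12812 — 3 statements merged into one kernel-verified Lean document; each statement's English description precedes it below -/
import Mathlib

section
/- For any real number a > 0, if x ≥ max{a·(ln a)², 1}, then x ≥ (a/4)·(ln x)². -/
lemma log_le_aux (t : ℝ) (ht : 0 < t) : Real.log t ≤ 2 * Real.sqrt t - 2 := by
  have hs : 0 < Real.sqrt t := Real.sqrt_pos.mpr ht
  have h1 : Real.log (Real.sqrt t) ≤ Real.sqrt t - 1 := Real.log_le_sub_one_of_pos hs
  have h2 : Real.log (Real.sqrt t) = Real.log t / 2 := Real.log_sqrt ht.le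
  linarith [h1, h2.symm.le, h2.le]

theorem stmt0 (a x : ℝ) (ha : 0 < a)
    (hx : max (a * (Real.log a) ^ 2) 1 ≤ x) :
    a / 4 * (Real.log x) ^ 2 ≤ x := by
  have hx1 : (1:ℝ) ≤ x := le_trans (le_max_right _ _) hx
  have hxa : a * (Real.log a) ^ 2 ≤ x := le_trans (le_max_left _ _) hx
  have hxpos : (0:ℝ) < x := lt_of_lt_of_le one_pos hx1
  have hlogx : 0 ≤ Real.log x := Real.log_nonneg hx1
  have hr : (0:ℝ) < Real.sqrt a := Real.sqrt_pos.mpr ha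
  have hs : (0:ℝ) < Real.sqrt x := Real.sqrt_pos.mpr hxpos
  have hr2 : Real.sqrt a ^ 2 = a := Real.sq_sqrt ha.le
  have hs2 : Real.sqrt x ^ 2 = x := Real.sq_sqrt hxpos.le
  set L := Real.log a with hL
  -- key: log x ≤ 2 * sqrt x / sqrt a
  have key : Real.log x ≤ 2 * Real.sqrt x / Real.sqrt a := by
    by_cases hL2 : L ≤ 2
    · -- case log a ≤ 2
      have hdiv : (0:ℝ) < x / a := div_pos hxpos ha
      have h1 : Real.log (x / a) ≤ 2 * Real.sqrt (x / a) - 2 := log_le_aux _ hdiv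
      have h2 : Real.log (x / a) = Real.log x - L := Real.log_div (ne_of_gt hxpos) (ne_of_gt ha)
      have h3 : Real.sqrt (x / a) = Real.sqrt x / Real.sqrt a := Real.sqrt_div' x ha.le ▸ by
        rw [Real.sqrt_div hxpos.le]
      rw [h3] at h1
      rw [mul_div_assoc]
      linarith
    · -- case log a > 2
      push_neg at hL2
      have hLpos : (0:ℝ) < L := by linarith
      set x0 := a * L ^ 2 with hx0
      have hx0pos : 0 < x0 := by positivity
      have hx0x : x0 ≤ x := hxa
      have hlogL : Real.log L ≤ L / 2 := by
        have h1 : Real.log L ≤ 2 * Real.sqrt L - 2 := log_le_aux _ hLpos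
        have h2 : Real.sqrt L ^ 2 = L := Real.sq_sqrt hLpos.le
        nlinarith [sq_nonneg (Real.sqrt L - 2)]
      have hlogx0 : Real.log x0 = L + 2 * Real.log L := by
        rw [hx0, Real.log_mul (ne_of_gt ha) (by positivity), Real.log_pow]
        push_cast; ring
      have hsx0 : Real.sqrt x0 = Real.sqrt a * L := by
        rw [hx0, Real.sqrt_mul ha.le, Real.sqrt_sq hLpos.le]
      have hsle : Real.sqrt a * L ≤ Real.sqrt x := by
        rw [← hsx0]; exact Real.sqrt_le_sqrt hx0x
      have hdiv : (0:ℝ) < x / x0 := div_pos hxpos hx0pos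
      have h1 : Real.log (x / x0) ≤ 2 * Real.sqrt (x / x0) - 2 := log_le_aux _ hdiv
      have h2 : Real.log (x / x0) = Real.log x - Real.log x0 :=
        Real.log_div (ne_of_gt hxpos) (ne_of_gt hx0pos)
      have h3 : Real.sqrt (x / x0) = Real.sqrt x / (Real.sqrt a * L) := by
        rw [Real.sqrt_div hxpos.le, hsx0]
      rw [h3, h2] at h1
      set u := Real.sqrt x / Real.sqrt a with hu
      have hLu : L ≤ u := by
        rw [hu, le_div_iff₀ hr]
        linarith [hsle]
      have hid : Real.sqrt x / (Real.sqrt a * L) = u / L := by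
        rw [hu, div_div]
      rw [hid] at h1
      have hbound : Real.log x ≤ 2 * L - 2 + 2 * (u / L) := by
        linarith
      have hfin : 2 * L - 2 + 2 * (u / L) ≤ 2 * u := by
        rw [show 2 * L - 2 + 2 * (u / L) = (2 * L ^ 2 - 2 * L + 2 * u) / L by
          field_simp, div_le_iff₀ hLpos]
        nlinarith [mul_nonneg (sub_nonneg.mpr hLu) (show (0:ℝ) ≤ L - 1 by linarith)]
      rw [mul_div_assoc]
      linarith
  -- finish
  have hsq : Real.log x ^ 2 ≤ (2 * Real.sqrt x / Real.sqrt a) ^ 2 := by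
    apply pow_le_pow_left₀ hlogx key
  have : (2 * Real.sqrt x / Real.sqrt a) ^ 2 = 4 * x / a := by
    field_simp
    nlinarith [hr2, hs2]
  rw [this] at hsq
  rw [div_mul_eq_mul_div, div_le_iff₀ (by norm_num : (0:ℝ) < 4)]
  calc a * Real.log x ^ 2 ≤ a * (4 * x / a) := by
        exact mul_le_mul_of_nonneg_left hsq ha.le
    _ = x * 4 := by field_simp
end

section
/- Let z₁, z₂, … be i.i.d. random vectors in ℝⁿ with E[zₜ] = 0 and E[‖z‖⁴] < ∞, and let {A(t₁,t₂)} be a family of n×n matrices with bounded operator norms. Set b_τ = (1/τ)∑_{t=1}^τ zₜ. Then E[∑_{τ₁,τ₂,τ₃,τ₄=t₀}^{t} b_{τ₁}ᵀ A(τ₁,τ₂) b_{τ₂} · b_{τ₃}ᵀ A(τ₃,τ₄) b_{τ₄}] ≤ 2·E[‖z‖⁴]·∑_{τ₁,τ₂,τ₃,τ₄=t₀}^{t} (‖A(τ₁,τ₂)‖·‖A(τ₃,τ₄)‖/(τ₂τ₃) + ‖A(τ₁,τ₂)‖·‖A(τ₃,τ₄)‖/(τ₂τ₄)). -/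
open MeasureTheory ProbabilityTheory Finset
open scoped RealInnerProductSpace

/-- `bavg z τ ω` is the partial average `(1/τ) ∑_{t=1}^τ z_t(ω)`. -/
noncomputable def bavg {Ω : Type*} {n : ℕ} (z : ℕ → Ω → EuclideanSpace ℝ (Fin n))
    (τ : ℕ) (ω : Ω) : EuclideanSpace ℝ (Fin n) :=
  (τ : ℝ)⁻¹ • ∑ s ∈ Finset.Icc 1 τ, z s ω


private lemma amgm4 (a b c d : ℝ) : a*b*c*d ≤ (a^4+b^4+c^4+d^4)/4 := by
  nlinarith [sq_nonneg (a*b - c*d), sq_nonneg (a^2 - b^2), sq_nonneg (c^2 - d^2)]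

section
variable {Ω : Type*} [MeasurableSpace Ω] {P : Measure Ω} [IsProbabilityMeasure P] {n : ℕ}
  {z : ℕ → Ω → EuclideanSpace ℝ (Fin n)}

private lemma prod_bound (B C : EuclideanSpace ℝ (Fin n) →L[ℝ] EuclideanSpace ℝ (Fin n))
    (x y u v : EuclideanSpace ℝ (Fin n)) :
    |⟪x, B y⟫ * ⟪u, C v⟫| ≤ ‖B‖*‖C‖*((‖x‖^4+‖y‖^4+‖u‖^4+‖v‖^4)/4) := by
  have hBy : ‖B y‖ ≤ ‖B‖ * ‖y‖ := B.le_opNorm y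
  have hCv : ‖C v‖ ≤ ‖C‖ * ‖v‖ := C.le_opNorm v
  have h1 : |⟪x, B y⟫| ≤ ‖x‖ * (‖B‖ * ‖y‖) :=
    (abs_real_inner_le_norm x (B y)).trans (mul_le_mul_of_nonneg_left hBy (norm_nonneg x))
  have h2 : |⟪u, C v⟫| ≤ ‖u‖ * (‖C‖ * ‖v‖) :=
    (abs_real_inner_le_norm u (C v)).trans (mul_le_mul_of_nonneg_left hCv (norm_nonneg u))
  calc |⟪x, B y⟫ * ⟪u, C v⟫| = |⟪x, B y⟫| * |⟪u, C v⟫| := abs_mul _ _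
    _ ≤ (‖x‖ * (‖B‖ * ‖y‖)) * (‖u‖ * (‖C‖ * ‖v‖)) :=
        mul_le_mul h1 h2 (abs_nonneg _) (by positivity)
    _ = ‖B‖*‖C‖*(‖x‖*‖y‖*‖u‖*‖v‖) := by ring
    _ ≤ ‖B‖*‖C‖*((‖x‖^4+‖y‖^4+‖u‖^4+‖v‖^4)/4) := by
        exact mul_le_mul_of_nonneg_left (amgm4 _ _ _ _)
          (mul_nonneg (norm_nonneg _) (norm_nonneg _))

private lemma dom_int (hz4 : ∀ s, Integrable (fun ω => ‖z s ω‖^4) P) (B C : EuclideanSpace ℝ (Fin n) →L[ℝ] EuclideanSpace ℝ (Fin n)) (a b c d : ℕ) :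
    Integrable (fun ω => ‖B‖*‖C‖*((‖z a ω‖^4+‖z b ω‖^4+‖z c ω‖^4+‖z d ω‖^4)/4)) P := by
  exact (((((hz4 a).add (hz4 b)).add (hz4 c)).add (hz4 d)).div_const 4).const_mul _

private lemma integrable_G (hmeas : ∀ i, Measurable (z i))
    (hz4 : ∀ s, Integrable (fun ω => ‖z s ω‖^4) P)
    (B C : EuclideanSpace ℝ (Fin n) →L[ℝ] EuclideanSpace ℝ (Fin n)) (a b c d : ℕ) :
    Integrable (fun ω => ⟪z a ω, B (z b ω)⟫ * ⟪z c ω, C (z d ω)⟫) P := by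
  apply Integrable.mono' (dom_int hz4 B C a b c d)
  · exact (((hmeas a).inner (B.continuous.measurable.comp (hmeas b))).mul
      ((hmeas c).inner (C.continuous.measurable.comp (hmeas d)))).aestronglyMeasurable
  · exact ae_of_all _ fun ω => by
      simpa only [Real.norm_eq_abs] using prod_bound B C (z a ω) (z b ω) (z c ω) (z d ω)

private lemma abs_integral_G_le (hmeas : ∀ i, Measurable (z i))
    (hident : ∀ i j, IdentDistrib (z i) (z j) P P)
    (hz4 : ∀ s, Integrable (fun ω => ‖z s ω‖^4) P)
    (B C : EuclideanSpace ℝ (Fin n) →L[ℝ] EuclideanSpace ℝ (Fin n)) (a b c d : ℕ) :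
    |∫ ω, ⟪z a ω, B (z b ω)⟫ * ⟪z c ω, C (z d ω)⟫ ∂P| ≤ ‖B‖*‖C‖*(∫ ω, ‖z 1 ω‖^4 ∂P) := by
  have hm4 : Measurable fun x : EuclideanSpace ℝ (Fin n) => ‖x‖^4 :=
    measurable_norm.pow_const 4
  have hz4eq : ∀ s, ∫ ω, ‖z s ω‖^4 ∂P = ∫ ω, ‖z 1 ω‖^4 ∂P := fun s =>
    ((hident s 1).comp hm4).integral_eq
  calc |∫ ω, ⟪z a ω, B (z b ω)⟫ * ⟪z c ω, C (z d ω)⟫ ∂P|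
      ≤ ∫ ω, |⟪z a ω, B (z b ω)⟫ * ⟪z c ω, C (z d ω)⟫| ∂P := by
        simpa only [Real.norm_eq_abs] using
          norm_integral_le_integral_norm (μ := P)
            (fun ω => ⟪z a ω, B (z b ω)⟫ * ⟪z c ω, C (z d ω)⟫)
    _ ≤ ∫ ω, ‖B‖*‖C‖*((‖z a ω‖^4+‖z b ω‖^4+‖z c ω‖^4+‖z d ω‖^4)/4) ∂P := by
        refine integral_mono_of_nonneg (ae_of_all _ fun ω => abs_nonneg _)
          (dom_int hz4 B C a b c d) (ae_of_all _ fun ω => ?_)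
        exact prod_bound B C (z a ω) (z b ω) (z c ω) (z d ω)
    _ = ‖B‖*‖C‖*(∫ ω, ‖z 1 ω‖^4 ∂P) := by
        have hab : Integrable (fun ω => ‖z a ω‖^4 + ‖z b ω‖^4) P := by
          exact (hz4 a).add (hz4 b)
        have habc : Integrable (fun ω => ‖z a ω‖^4 + ‖z b ω‖^4 + ‖z c ω‖^4) P := by
          exact hab.add (hz4 c)
        rw [integral_const_mul, MeasureTheory.integral_div, integral_add habc (hz4 d),
          integral_add hab (hz4 c), integral_add (hz4 a) (hz4 b),
          hz4eq a, hz4eq b, hz4eq c, hz4eq d]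
        ring

private lemma coord_abs_le {m : ℕ} (x : EuclideanSpace ℝ (Fin m)) (k : Fin m) : |x k| ≤ ‖x‖ := by
  rw [EuclideanSpace.norm_eq, ← Real.sqrt_sq_eq_abs]
  apply Real.sqrt_le_sqrt
  have := Finset.single_le_sum (f := fun i => ‖x i‖^2) (fun i _ => by positivity) (Finset.mem_univ k)
  simpa [Real.norm_eq_abs, sq_abs] using this

private lemma lonely_zero (hmeas : ∀ i, Measurable (z i))
    (hindep : iIndepFun z P)
    (hmean : ∀ i, ∫ ω, z i ω ∂P = 0)
    (hzint : ∀ i, Integrable (z i) P)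
    (hz4 : ∀ s, Integrable (fun ω => ‖z s ω‖^4) P)
    (B C : EuclideanSpace ℝ (Fin n) →L[ℝ] EuclideanSpace ℝ (Fin n)) (a b c d : ℕ)
    (hab : a ≠ b) (hac : a ≠ c) (had : a ≠ d) :
    ∫ ω, ⟪z a ω, B (z b ω)⟫ * ⟪z c ω, C (z d ω)⟫ ∂P = 0 := by
  classical
  have hkey : (fun ω => ⟪z a ω, B (z b ω)⟫ * ⟪z c ω, C (z d ω)⟫)
      = fun ω => ∑ k : Fin n, (z a ω k) * ((B (z b ω)) k * ⟪z c ω, C (z d ω)⟫) := by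
    funext ω
    rw [PiLp.inner_apply (x := z a ω) (y := B (z b ω))]
    simp only [RCLike.inner_apply, conj_trivial, Finset.sum_mul, mul_assoc]
    exact Finset.sum_congr rfl fun k _ => by ring
  rw [hkey, integral_finset_sum]
  · refine Finset.sum_eq_zero fun k _ => ?_
    have hbm : b ∈ ({b, c, d} : Finset ℕ) := by simp
    have hcm : c ∈ ({b, c, d} : Finset ℕ) := by simp
    have hdm : d ∈ ({b, c, d} : Finset ℕ) := by simp
    have ham : a ∈ ({a} : Finset ℕ) := Finset.mem_singleton_self a
    have hD : Disjoint ({a} : Finset ℕ) ({b, c, d} : Finset ℕ) := by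
      simp [Finset.disjoint_left, hab, hac, had]
    have hInd := hindep.indepFun_finset {a} {b, c, d} hD hmeas
    let φ : (∀ _ : ({a} : Finset ℕ), EuclideanSpace ℝ (Fin n)) → ℝ := fun v => v ⟨a, ham⟩ k
    let ψ : (∀ _ : ({b, c, d} : Finset ℕ), EuclideanSpace ℝ (Fin n)) → ℝ :=
      fun v => (B (v ⟨b, hbm⟩)) k * ⟪v ⟨c, hcm⟩, C (v ⟨d, hdm⟩)⟫
    have hφ : Measurable φ := by
      exact ((measurable_pi_apply k).comp (WithLp.measurable_ofLp 2 (Fin n → ℝ))).comp (measurable_pi_apply _)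
    have hψ : Measurable ψ := by
      apply Measurable.mul
      · exact ((measurable_pi_apply k).comp (WithLp.measurable_ofLp 2 (Fin n → ℝ))).comp
          (B.continuous.measurable.comp (measurable_pi_apply _))
      · exact (measurable_pi_apply _).inner
          (C.continuous.measurable.comp (measurable_pi_apply _))
    have hIk : IndepFun (fun ω => z a ω k)
        (fun ω => (B (z b ω)) k * ⟪z c ω, C (z d ω)⟫) P := hInd.comp hφ hψ
    have hXm : AEStronglyMeasurable (fun ω => z a ω k) P :=
      (((measurable_pi_apply k).comp (WithLp.measurable_ofLp 2 (Fin n → ℝ))).comp (hmeas a)).aestronglyMeasurable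
    have hYm : AEStronglyMeasurable (fun ω => (B (z b ω)) k * ⟪z c ω, C (z d ω)⟫) P :=
      ((((measurable_pi_apply k).comp (WithLp.measurable_ofLp 2 (Fin n → ℝ))).comp (B.continuous.measurable.comp (hmeas b))).mul
        ((hmeas c).inner (C.continuous.measurable.comp (hmeas d)))).aestronglyMeasurable
    have hz0 : ∫ ω, z a ω k ∂P = 0 := by
      have h := (EuclideanSpace.proj k (𝕜 := ℝ)).integral_comp_comm (hzint a)
      simp only [hmean a, map_zero, PiLp.proj_apply] at h
      exact h
    rw [hIk.integral_fun_mul_eq_mul_integral hXm hYm, hz0, zero_mul]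
  · intro k _
    apply Integrable.mono' (dom_int hz4 B C a b c d)
    · exact ((((measurable_pi_apply k).comp (WithLp.measurable_ofLp 2 (Fin n → ℝ))).comp (hmeas a)).mul
        ((((measurable_pi_apply k).comp (WithLp.measurable_ofLp 2 (Fin n → ℝ))).comp (B.continuous.measurable.comp (hmeas b))).mul
          ((hmeas c).inner (C.continuous.measurable.comp (hmeas d))))).aestronglyMeasurable
    · refine ae_of_all _ fun ω => ?_
      have h1 : |z a ω k| ≤ ‖z a ω‖ := coord_abs_le _ k
      have h2 : |(B (z b ω)) k| ≤ ‖B‖ * ‖z b ω‖ :=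
        (coord_abs_le _ k).trans (B.le_opNorm _)
      have h3 : |⟪z c ω, C (z d ω)⟫| ≤ ‖z c ω‖ * (‖C‖ * ‖z d ω‖) :=
        (abs_real_inner_le_norm _ _).trans
          (mul_le_mul_of_nonneg_left (C.le_opNorm _) (norm_nonneg _))
      have hle : |z a ω k * ((B (z b ω)) k * ⟪z c ω, C (z d ω)⟫)|
          ≤ ‖z a ω‖ * ((‖B‖ * ‖z b ω‖) * (‖z c ω‖ * (‖C‖ * ‖z d ω‖))) := by
        rw [abs_mul, abs_mul]
        refine mul_le_mul h1 (mul_le_mul h2 h3 (abs_nonneg _) (by positivity))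
          (by positivity) (norm_nonneg _)
      refine (le_trans (le_of_eq (Real.norm_eq_abs _)) (hle.trans ?_))
      have := amgm4 ‖z a ω‖ ‖z b ω‖ ‖z c ω‖ ‖z d ω‖
      calc ‖z a ω‖ * ((‖B‖ * ‖z b ω‖) * (‖z c ω‖ * (‖C‖ * ‖z d ω‖)))
          = ‖B‖*‖C‖*(‖z a ω‖*‖z b ω‖*‖z c ω‖*‖z d ω‖) := by ring
        _ ≤ ‖B‖*‖C‖*((‖z a ω‖^4+‖z b ω‖^4+‖z c ω‖^4+‖z d ω‖^4)/4) :=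
            mul_le_mul_of_nonneg_left this (mul_nonneg (norm_nonneg _) (norm_nonneg _))

private lemma inner_flip (B : EuclideanSpace ℝ (Fin n) →L[ℝ] EuclideanSpace ℝ (Fin n))
    (x y : EuclideanSpace ℝ (Fin n)) :
    ⟪x, B y⟫ = ⟪y, (ContinuousLinearMap.adjoint B) x⟫ := by
  rw [← ContinuousLinearMap.adjoint_inner_left, real_inner_comm]

private lemma lonely_zero₂ (hmeas : ∀ i, Measurable (z i))
    (hindep : iIndepFun z P)
    (hmean : ∀ i, ∫ ω, z i ω ∂P = 0)
    (hzint : ∀ i, Integrable (z i) P)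
    (hz4 : ∀ s, Integrable (fun ω => ‖z s ω‖^4) P)
    (B C : EuclideanSpace ℝ (Fin n) →L[ℝ] EuclideanSpace ℝ (Fin n)) (a b c d : ℕ)
    (hba : b ≠ a) (hbc : b ≠ c) (hbd : b ≠ d) :
    ∫ ω, ⟪z a ω, B (z b ω)⟫ * ⟪z c ω, C (z d ω)⟫ ∂P = 0 := by
  refine (integral_congr_ae (Filter.Eventually.of_forall fun ω => ?_)).trans
    (lonely_zero hmeas hindep hmean hzint hz4 (ContinuousLinearMap.adjoint B) C b a c d
      hba hbc hbd)
  rw [inner_flip B (z a ω) (z b ω)]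

private lemma lonely_zero₃ (hmeas : ∀ i, Measurable (z i))
    (hindep : iIndepFun z P)
    (hmean : ∀ i, ∫ ω, z i ω ∂P = 0)
    (hzint : ∀ i, Integrable (z i) P)
    (hz4 : ∀ s, Integrable (fun ω => ‖z s ω‖^4) P)
    (B C : EuclideanSpace ℝ (Fin n) →L[ℝ] EuclideanSpace ℝ (Fin n)) (a b c d : ℕ)
    (hca : c ≠ a) (hcb : c ≠ b) (hcd : c ≠ d) :
    ∫ ω, ⟪z a ω, B (z b ω)⟫ * ⟪z c ω, C (z d ω)⟫ ∂P = 0 := by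
  refine (integral_congr_ae (Filter.Eventually.of_forall fun ω => mul_comm _ _)).trans
    (lonely_zero hmeas hindep hmean hzint hz4 C B c d a b hcd hca hcb)

private lemma lonely_zero₄ (hmeas : ∀ i, Measurable (z i))
    (hindep : iIndepFun z P)
    (hmean : ∀ i, ∫ ω, z i ω ∂P = 0)
    (hzint : ∀ i, Integrable (z i) P)
    (hz4 : ∀ s, Integrable (fun ω => ‖z s ω‖^4) P)
    (B C : EuclideanSpace ℝ (Fin n) →L[ℝ] EuclideanSpace ℝ (Fin n)) (a b c d : ℕ)
    (hda : d ≠ a) (hdb : d ≠ b) (hdc : d ≠ c) :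
    ∫ ω, ⟪z a ω, B (z b ω)⟫ * ⟪z c ω, C (z d ω)⟫ ∂P = 0 := by
  refine (integral_congr_ae (Filter.Eventually.of_forall fun ω => ?_)).trans
    (lonely_zero₃ hmeas hindep hmean hzint hz4 B (ContinuousLinearMap.adjoint C) a b d c
      hda hdb hdc)
  rw [inner_flip C (z c ω) (z d ω)]

private lemma hexp (B C : EuclideanSpace ℝ (Fin n) →L[ℝ] EuclideanSpace ℝ (Fin n))
    (τ₁ τ₂ τ₃ τ₄ : ℕ) :
    (fun ω => ⟪bavg z τ₁ ω, B (bavg z τ₂ ω)⟫ * ⟪bavg z τ₃ ω, C (bavg z τ₄ ω)⟫)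
      = fun ω => ((τ₁:ℝ)⁻¹*(τ₂:ℝ)⁻¹*((τ₃:ℝ)⁻¹*(τ₄:ℝ)⁻¹)) *
          ∑ s₁ ∈ Icc 1 τ₁, ∑ s₂ ∈ Icc 1 τ₂, ∑ s₃ ∈ Icc 1 τ₃, ∑ s₄ ∈ Icc 1 τ₄,
            (⟪z s₁ ω, B (z s₂ ω)⟫ * ⟪z s₃ ω, C (z s₄ ω)⟫) := by
  have e1 : ∀ (B : EuclideanSpace ℝ (Fin n) →L[ℝ] EuclideanSpace ℝ (Fin n)) (τ τ' : ℕ) (ω : Ω),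
      ⟪bavg z τ ω, B (bavg z τ' ω)⟫
        = (τ:ℝ)⁻¹*(τ':ℝ)⁻¹ * ∑ s ∈ Icc 1 τ, ∑ s' ∈ Icc 1 τ', ⟪z s ω, B (z s' ω)⟫ := by
    intro B τ τ' ω
    simp only [bavg, _root_.map_smul, real_inner_smul_left, real_inner_smul_right, map_sum,
      sum_inner, inner_sum, ← Finset.mul_sum]
    rw [Finset.sum_comm]
    ring
  funext ω
  rw [e1 B τ₁ τ₂ ω, e1 C τ₃ τ₄ ω, mul_mul_mul_comm]
  congr 1
  simp only [Finset.sum_mul]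
  simp only [Finset.mul_sum]

private lemma card₁ (τ₁ τ₂ τ₃ τ₄ : ℕ) :
    (((Icc 1 τ₁) ×ˢ (Icc 1 τ₂) ×ˢ (Icc 1 τ₃) ×ˢ (Icc 1 τ₄)).filter
      (fun s : ℕ×ℕ×ℕ×ℕ => s.1 = s.2.1 ∧ s.2.2.1 = s.2.2.2)).card ≤ τ₁ * τ₃ := by
  classical
  have h : (((Icc 1 τ₁) ×ˢ (Icc 1 τ₂) ×ˢ (Icc 1 τ₃) ×ˢ (Icc 1 τ₄)).filter
      (fun s : ℕ×ℕ×ℕ×ℕ => s.1 = s.2.1 ∧ s.2.2.1 = s.2.2.2)).card ≤ (Icc 1 τ₁ ×ˢ Icc 1 τ₃).card := by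
    apply Finset.card_le_card_of_injOn (fun s : ℕ×ℕ×ℕ×ℕ => (s.1, s.2.2.1))
    · rintro ⟨a,b,c,d⟩ hs
      simp only [Finset.mem_coe, Finset.mem_filter, Finset.mem_product, Finset.mem_Icc] at hs ⊢
      omega
    · rintro ⟨a,b,c,d⟩ hs ⟨a',b',c',d'⟩ hs' hh
      simp only [Finset.coe_filter, Set.mem_setOf_eq, Finset.mem_product, Finset.mem_Icc,
        Prod.mk.injEq] at hs hs'
      simp only [Prod.mk.injEq] at hh ⊢
      omega
  simpa [Nat.card_Icc] using h

private lemma card₂ (τ₁ τ₂ τ₃ τ₄ : ℕ) :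
    (((Icc 1 τ₁) ×ˢ (Icc 1 τ₂) ×ˢ (Icc 1 τ₃) ×ˢ (Icc 1 τ₄)).filter
      (fun s : ℕ×ℕ×ℕ×ℕ => s.1 = s.2.2.1 ∧ s.2.1 = s.2.2.2)).card ≤ τ₁ * τ₄ := by
  classical
  have h : (((Icc 1 τ₁) ×ˢ (Icc 1 τ₂) ×ˢ (Icc 1 τ₃) ×ˢ (Icc 1 τ₄)).filter
      (fun s : ℕ×ℕ×ℕ×ℕ => s.1 = s.2.2.1 ∧ s.2.1 = s.2.2.2)).card ≤ (Icc 1 τ₁ ×ˢ Icc 1 τ₄).card := by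
    apply Finset.card_le_card_of_injOn (fun s : ℕ×ℕ×ℕ×ℕ => (s.1, s.2.2.2))
    · rintro ⟨a,b,c,d⟩ hs
      simp only [Finset.mem_coe, Finset.mem_filter, Finset.mem_product, Finset.mem_Icc] at hs ⊢
      omega
    · rintro ⟨a,b,c,d⟩ hs ⟨a',b',c',d'⟩ hs' hh
      simp only [Finset.coe_filter, Set.mem_setOf_eq, Finset.mem_product, Finset.mem_Icc,
        Prod.mk.injEq] at hs hs'
      simp only [Prod.mk.injEq] at hh ⊢
      omega
  simpa [Nat.card_Icc] using h

private lemma card₃ (τ₁ τ₂ τ₃ τ₄ : ℕ) :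
    (((Icc 1 τ₁) ×ˢ (Icc 1 τ₂) ×ˢ (Icc 1 τ₃) ×ˢ (Icc 1 τ₄)).filter
      (fun s : ℕ×ℕ×ℕ×ℕ => s.1 = s.2.2.2 ∧ s.2.1 = s.2.2.1)).card ≤ τ₁ * τ₃ := by
  classical
  have h : (((Icc 1 τ₁) ×ˢ (Icc 1 τ₂) ×ˢ (Icc 1 τ₃) ×ˢ (Icc 1 τ₄)).filter
      (fun s : ℕ×ℕ×ℕ×ℕ => s.1 = s.2.2.2 ∧ s.2.1 = s.2.2.1)).card ≤ (Icc 1 τ₁ ×ˢ Icc 1 τ₃).card := by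
    apply Finset.card_le_card_of_injOn (fun s : ℕ×ℕ×ℕ×ℕ => (s.1, s.2.2.1))
    · rintro ⟨a,b,c,d⟩ hs
      simp only [Finset.mem_coe, Finset.mem_filter, Finset.mem_product, Finset.mem_Icc] at hs ⊢
      omega
    · rintro ⟨a,b,c,d⟩ hs ⟨a',b',c',d'⟩ hs' hh
      simp only [Finset.coe_filter, Set.mem_setOf_eq, Finset.mem_product, Finset.mem_Icc,
        Prod.mk.injEq] at hs hs'
      simp only [Prod.mk.injEq] at hh ⊢
      omega
  simpa [Nat.card_Icc] using h

private lemma term_integrable (hmeas : ∀ i, Measurable (z i))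
    (hz4 : ∀ s, Integrable (fun ω => ‖z s ω‖^4) P)
    (B C : EuclideanSpace ℝ (Fin n) →L[ℝ] EuclideanSpace ℝ (Fin n)) (τ₁ τ₂ τ₃ τ₄ : ℕ) :
    Integrable (fun ω => ⟪bavg z τ₁ ω, B (bavg z τ₂ ω)⟫ * ⟪bavg z τ₃ ω, C (bavg z τ₄ ω)⟫) P := by
  rw [hexp B C τ₁ τ₂ τ₃ τ₄]
  exact (integrable_finset_sum _ fun s₁ _ => integrable_finset_sum _ fun s₂ _ =>
    integrable_finset_sum _ fun s₃ _ => integrable_finset_sum _ fun s₄ _ =>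
      integrable_G hmeas hz4 B C s₁ s₂ s₃ s₄).const_mul _

private lemma key_le (hmeas : ∀ i, Measurable (z i))
    (hindep : iIndepFun z P)
    (hident : ∀ i j, IdentDistrib (z i) (z j) P P)
    (hmean : ∀ i, ∫ ω, z i ω ∂P = 0)
    (hzint : ∀ i, Integrable (z i) P)
    (hz4 : ∀ s, Integrable (fun ω => ‖z s ω‖^4) P)
    (B C : EuclideanSpace ℝ (Fin n) →L[ℝ] EuclideanSpace ℝ (Fin n)) (τ₁ τ₂ τ₃ τ₄ : ℕ)
    (h1 : 1 ≤ τ₁) (h2 : 1 ≤ τ₂) (h3 : 1 ≤ τ₃) (h4 : 1 ≤ τ₄) :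
    ∫ ω, ⟪bavg z τ₁ ω, B (bavg z τ₂ ω)⟫ * ⟪bavg z τ₃ ω, C (bavg z τ₄ ω)⟫ ∂P
      ≤ 2*(∫ ω, ‖z 1 ω‖^4 ∂P)*(‖B‖*‖C‖/((τ₂:ℝ)*(τ₃:ℝ)) + ‖B‖*‖C‖/((τ₂:ℝ)*(τ₄:ℝ))) := by
  classical
  set K := ∫ ω, ‖z 1 ω‖^4 ∂P with hKdef
  have hK0 : 0 ≤ K := integral_nonneg fun ω => by positivity
  set T := (Icc 1 τ₁) ×ˢ (Icc 1 τ₂) ×ˢ (Icc 1 τ₃) ×ˢ (Icc 1 τ₄) with hT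
  let p : ℕ×ℕ×ℕ×ℕ → Prop := fun s =>
    (s.1 = s.2.1 ∧ s.2.2.1 = s.2.2.2) ∨ ((s.1 = s.2.2.1 ∧ s.2.1 = s.2.2.2)
      ∨ (s.1 = s.2.2.2 ∧ s.2.1 = s.2.2.1))
  set F : ℕ → ℕ → ℕ → ℕ → ℝ :=
    fun a b c d => ∫ ω, ⟪z a ω, B (z b ω)⟫ * ⟪z c ω, C (z d ω)⟫ ∂P with hF
  have hswap : ∫ ω, ((τ₁:ℝ)⁻¹*(τ₂:ℝ)⁻¹*((τ₃:ℝ)⁻¹*(τ₄:ℝ)⁻¹)) *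
        (∑ s₁ ∈ Icc 1 τ₁, ∑ s₂ ∈ Icc 1 τ₂, ∑ s₃ ∈ Icc 1 τ₃, ∑ s₄ ∈ Icc 1 τ₄,
          (⟪z s₁ ω, B (z s₂ ω)⟫ * ⟪z s₃ ω, C (z s₄ ω)⟫)) ∂P
      = ((τ₁:ℝ)⁻¹*(τ₂:ℝ)⁻¹*((τ₃:ℝ)⁻¹*(τ₄:ℝ)⁻¹)) *
          ∑ s₁ ∈ Icc 1 τ₁, ∑ s₂ ∈ Icc 1 τ₂, ∑ s₃ ∈ Icc 1 τ₃, ∑ s₄ ∈ Icc 1 τ₄,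
            F s₁ s₂ s₃ s₄ := by
    rw [integral_const_mul]
    congr 1
    rw [integral_finset_sum _ fun s₁ _ => integrable_finset_sum _ fun s₂ _ =>
      integrable_finset_sum _ fun s₃ _ => integrable_finset_sum _ fun s₄ _ =>
        integrable_G hmeas hz4 B C s₁ s₂ s₃ s₄]
    refine Finset.sum_congr rfl fun s₁ _ => ?_
    rw [integral_finset_sum _ fun s₂ _ => integrable_finset_sum _ fun s₃ _ =>
      integrable_finset_sum _ fun s₄ _ => integrable_G hmeas hz4 B C s₁ s₂ s₃ s₄]
    refine Finset.sum_congr rfl fun s₂ _ => ?_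
    rw [integral_finset_sum _ fun s₃ _ => integrable_finset_sum _ fun s₄ _ =>
      integrable_G hmeas hz4 B C s₁ s₂ s₃ s₄]
    refine Finset.sum_congr rfl fun s₃ _ => ?_
    rw [integral_finset_sum _ fun s₄ _ => integrable_G hmeas hz4 B C s₁ s₂ s₃ s₄]
  have hprod : (∑ s₁ ∈ Icc 1 τ₁, ∑ s₂ ∈ Icc 1 τ₂, ∑ s₃ ∈ Icc 1 τ₃, ∑ s₄ ∈ Icc 1 τ₄,
      F s₁ s₂ s₃ s₄) = ∑ s ∈ T, F s.1 s.2.1 s.2.2.1 s.2.2.2 := by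
    rw [hT]
    simp only [Finset.sum_product]
  have hzero : ∀ x ∈ T, F x.1 x.2.1 x.2.2.1 x.2.2.2 ≠ 0 → p x := by
    rintro ⟨a,b,c,d⟩ _ hne
    by_contra hpx
    apply hne
    simp only [p, not_or, not_and_or] at hpx
    have hcases : (a≠b∧a≠c∧a≠d) ∨ (b≠a∧b≠c∧b≠d) ∨ (c≠a∧c≠b∧c≠d) ∨ (d≠a∧d≠b∧d≠c) := by
      omega
    rcases hcases with ⟨e1,e2,e3⟩|⟨e1,e2,e3⟩|⟨e1,e2,e3⟩|⟨e1,e2,e3⟩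
    · exact lonely_zero hmeas hindep hmean hzint hz4 B C a b c d e1 e2 e3
    · exact lonely_zero₂ hmeas hindep hmean hzint hz4 B C a b c d e1 e2 e3
    · exact lonely_zero₃ hmeas hindep hmean hzint hz4 B C a b c d e1 e2 e3
    · exact lonely_zero₄ hmeas hindep hmean hzint hz4 B C a b c d e1 e2 e3
  have hfil : ∑ s ∈ T, F s.1 s.2.1 s.2.2.1 s.2.2.2
      = ∑ s ∈ T.filter p, F s.1 s.2.1 s.2.2.1 s.2.2.2 :=
    (Finset.sum_filter_of_ne hzero).symm
  have hle1 : ∑ s ∈ T.filter p, F s.1 s.2.1 s.2.2.1 s.2.2.2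
      ≤ ((T.filter p).card : ℝ) * (‖B‖*‖C‖*K) := by
    have h := Finset.sum_le_card_nsmul (T.filter p) _ (‖B‖*‖C‖*K)
      (fun x _ => (le_abs_self _).trans
        (abs_integral_G_le hmeas hident hz4 B C x.1 x.2.1 x.2.2.1 x.2.2.2))
    rw [nsmul_eq_mul] at h
    exact h
  have hcardN : (T.filter p).card ≤ τ₁*τ₃ + (τ₁*τ₄ + τ₁*τ₃) := by
    have hsplit : T.filter p ⊆ (T.filter fun s : ℕ×ℕ×ℕ×ℕ => s.1 = s.2.1 ∧ s.2.2.1 = s.2.2.2)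
        ∪ ((T.filter fun s : ℕ×ℕ×ℕ×ℕ => s.1 = s.2.2.1 ∧ s.2.1 = s.2.2.2)
          ∪ (T.filter fun s : ℕ×ℕ×ℕ×ℕ => s.1 = s.2.2.2 ∧ s.2.1 = s.2.2.1)) := by
      intro s hs
      simp only [p, Finset.mem_filter, Finset.mem_union] at hs ⊢
      tauto
    calc (T.filter p).card
        ≤ ((T.filter fun s : ℕ×ℕ×ℕ×ℕ => s.1 = s.2.1 ∧ s.2.2.1 = s.2.2.2)
            ∪ ((T.filter fun s : ℕ×ℕ×ℕ×ℕ => s.1 = s.2.2.1 ∧ s.2.1 = s.2.2.2)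
              ∪ (T.filter fun s : ℕ×ℕ×ℕ×ℕ => s.1 = s.2.2.2 ∧ s.2.1 = s.2.2.1))).card :=
          Finset.card_le_card hsplit
      _ ≤ (T.filter fun s : ℕ×ℕ×ℕ×ℕ => s.1 = s.2.1 ∧ s.2.2.1 = s.2.2.2).card
          + ((T.filter fun s : ℕ×ℕ×ℕ×ℕ => s.1 = s.2.2.1 ∧ s.2.1 = s.2.2.2)
            ∪ (T.filter fun s : ℕ×ℕ×ℕ×ℕ => s.1 = s.2.2.2 ∧ s.2.1 = s.2.2.1)).card :=
          Finset.card_union_le _ _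
      _ ≤ (T.filter fun s : ℕ×ℕ×ℕ×ℕ => s.1 = s.2.1 ∧ s.2.2.1 = s.2.2.2).card
          + ((T.filter fun s : ℕ×ℕ×ℕ×ℕ => s.1 = s.2.2.1 ∧ s.2.1 = s.2.2.2).card
            + (T.filter fun s : ℕ×ℕ×ℕ×ℕ => s.1 = s.2.2.2 ∧ s.2.1 = s.2.2.1).card) :=
          Nat.add_le_add_left (Finset.card_union_le _ _) _
      _ ≤ τ₁*τ₃ + (τ₁*τ₄ + τ₁*τ₃) :=
          Nat.add_le_add (card₁ τ₁ τ₂ τ₃ τ₄)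
            (Nat.add_le_add (card₂ τ₁ τ₂ τ₃ τ₄) (card₃ τ₁ τ₂ τ₃ τ₄))
  have hcardR : ((T.filter p).card : ℝ) ≤ (τ₁:ℝ)*τ₃ + ((τ₁:ℝ)*τ₄ + (τ₁:ℝ)*τ₃) := by
    have := (Nat.cast_le (α := ℝ)).mpr hcardN
    push_cast at this
    linarith
  have hτ1 : (0:ℝ) < τ₁ := by exact_mod_cast h1
  have hτ2 : (0:ℝ) < τ₂ := by exact_mod_cast h2
  have hτ3 : (0:ℝ) < τ₃ := by exact_mod_cast h3
  have hτ4 : (0:ℝ) < τ₄ := by exact_mod_cast h4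
  have hN0 : 0 ≤ ‖B‖*‖C‖*K := by positivity
  have hc0 : 0 ≤ ((τ₁:ℝ)⁻¹*(τ₂:ℝ)⁻¹*((τ₃:ℝ)⁻¹*(τ₄:ℝ)⁻¹)) := by positivity
  calc ∫ ω, ⟪bavg z τ₁ ω, B (bavg z τ₂ ω)⟫ * ⟪bavg z τ₃ ω, C (bavg z τ₄ ω)⟫ ∂P
      = ((τ₁:ℝ)⁻¹*(τ₂:ℝ)⁻¹*((τ₃:ℝ)⁻¹*(τ₄:ℝ)⁻¹)) *
          ∑ s ∈ T.filter p, F s.1 s.2.1 s.2.2.1 s.2.2.2 := by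
        rw [hexp B C τ₁ τ₂ τ₃ τ₄, hswap, hprod, hfil]
    _ ≤ ((τ₁:ℝ)⁻¹*(τ₂:ℝ)⁻¹*((τ₃:ℝ)⁻¹*(τ₄:ℝ)⁻¹)) *
          (((τ₁:ℝ)*τ₃ + ((τ₁:ℝ)*τ₄ + (τ₁:ℝ)*τ₃)) * (‖B‖*‖C‖*K)) := by
        apply mul_le_mul_of_nonneg_left _ hc0
        exact hle1.trans (mul_le_mul_of_nonneg_right hcardR hN0)
    _ ≤ 2*K*(‖B‖*‖C‖/((τ₂:ℝ)*(τ₃:ℝ)) + ‖B‖*‖C‖/((τ₂:ℝ)*(τ₄:ℝ))) := by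
        obtain ⟨N', hN'0, hN'⟩ : ∃ x, 0 ≤ x ∧ ‖B‖*‖C‖ = x :=
          ⟨‖B‖*‖C‖, by positivity, rfl⟩
        rw [hN']
        have heq : ((τ₁:ℝ)⁻¹*(τ₂:ℝ)⁻¹*((τ₃:ℝ)⁻¹*(τ₄:ℝ)⁻¹)) *
            (((τ₁:ℝ)*τ₃ + ((τ₁:ℝ)*τ₄ + (τ₁:ℝ)*τ₃)) * (N'*K))
            = N'*K*((τ₂:ℝ)*(τ₄:ℝ))⁻¹
              + (N'*K*((τ₂:ℝ)*(τ₃:ℝ))⁻¹ + N'*K*((τ₂:ℝ)*(τ₄:ℝ))⁻¹) := by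
          field_simp
        have hR : 2*K*(N'/((τ₂:ℝ)*(τ₃:ℝ)) + N'/((τ₂:ℝ)*(τ₄:ℝ)))
            = 2*(N'*K*((τ₂:ℝ)*(τ₃:ℝ))⁻¹) + 2*(N'*K*((τ₂:ℝ)*(τ₄:ℝ))⁻¹) := by
          field_simp
        rw [heq, hR]
        have g1 : 0 ≤ N'*K*((τ₂:ℝ)*(τ₃:ℝ))⁻¹ := by positivity
        linarith
end

theorem stmt9 {Ω : Type*} [MeasurableSpace Ω] (P : Measure Ω) [IsProbabilityMeasure P]
    (n : ℕ) (z : ℕ → Ω → EuclideanSpace ℝ (Fin n)) (hmeas : ∀ i, Measurable (z i))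
    (hindep : iIndepFun z P)
    (hident : ∀ i j, IdentDistrib (z i) (z j) P P)
    (hmean : ∀ i, ∫ ω, z i ω ∂P = 0)
    (hint : Integrable (fun ω => ‖z 1 ω‖ ^ 4) P)
    (A : ℕ → ℕ → EuclideanSpace ℝ (Fin n) →L[ℝ] EuclideanSpace ℝ (Fin n))
    (hA : ∃ M : ℝ, ∀ t₁ t₂, ‖A t₁ t₂‖ ≤ M)
    (t₀ t : ℕ) (ht₀ : 1 ≤ t₀) (ht : t₀ ≤ t) :
    (∫ ω, ∑ τ₁ ∈ Finset.Icc t₀ t, ∑ τ₂ ∈ Finset.Icc t₀ t,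
        ∑ τ₃ ∈ Finset.Icc t₀ t, ∑ τ₄ ∈ Finset.Icc t₀ t,
          ⟪bavg z τ₁ ω, A τ₁ τ₂ (bavg z τ₂ ω)⟫ *
            ⟪bavg z τ₃ ω, A τ₃ τ₄ (bavg z τ₄ ω)⟫ ∂P) ≤
      2 * (∫ ω, ‖z 1 ω‖ ^ 4 ∂P) *
        ∑ τ₁ ∈ Finset.Icc t₀ t, ∑ τ₂ ∈ Finset.Icc t₀ t,
          ∑ τ₃ ∈ Finset.Icc t₀ t, ∑ τ₄ ∈ Finset.Icc t₀ t,
            (‖A τ₁ τ₂‖ * ‖A τ₃ τ₄‖ / ((τ₂ : ℝ) * (τ₃ : ℝ)) +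
              ‖A τ₁ τ₂‖ * ‖A τ₃ τ₄‖ / ((τ₂ : ℝ) * (τ₄ : ℝ))) := by
  have hz4 : ∀ s, Integrable (fun ω => ‖z s ω‖^4) P := fun s => by
    exact (((hident s 1).comp (measurable_norm.pow_const 4)).integrable_iff).mpr hint
  have hzint : ∀ s, Integrable (z s) P := fun s => by
    refine Integrable.mono' ((integrable_const 1).add (hz4 s)) (hmeas s).aestronglyMeasurable
      (ae_of_all _ fun ω => ?_)
    have h0 : 0 ≤ ‖z s ω‖ := norm_nonneg _
    simp only [Pi.add_apply]
    nlinarith [sq_nonneg (‖z s ω‖^2 - 1), sq_nonneg (‖z s ω‖ - 1)]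
  have hm1 : ∀ τ₁, τ₁ ∈ Finset.Icc t₀ t → 1 ≤ τ₁ := fun τ₁ hτ =>
    le_trans ht₀ (Finset.mem_Icc.mp hτ).1
  rw [integral_finset_sum _ (fun τ₁ _ => integrable_finset_sum _ (fun τ₂ _ =>
    integrable_finset_sum _ (fun τ₃ _ => integrable_finset_sum _ (fun τ₄ _ =>
      term_integrable hmeas hz4 (A τ₁ τ₂) (A τ₃ τ₄) τ₁ τ₂ τ₃ τ₄))))]
  have hIswap : ∀ τ₁ ∈ Finset.Icc t₀ t,
      ∫ ω, (∑ τ₂ ∈ Finset.Icc t₀ t, ∑ τ₃ ∈ Finset.Icc t₀ t, ∑ τ₄ ∈ Finset.Icc t₀ t,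
          ⟪bavg z τ₁ ω, A τ₁ τ₂ (bavg z τ₂ ω)⟫ * ⟪bavg z τ₃ ω, A τ₃ τ₄ (bavg z τ₄ ω)⟫) ∂P
        = ∑ τ₂ ∈ Finset.Icc t₀ t, ∑ τ₃ ∈ Finset.Icc t₀ t, ∑ τ₄ ∈ Finset.Icc t₀ t,
            ∫ ω, ⟪bavg z τ₁ ω, A τ₁ τ₂ (bavg z τ₂ ω)⟫ *
              ⟪bavg z τ₃ ω, A τ₃ τ₄ (bavg z τ₄ ω)⟫ ∂P := by
    intro τ₁ _
    rw [integral_finset_sum _ (fun τ₂ _ => integrable_finset_sum _ fun τ₃ _ =>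
      integrable_finset_sum _ fun τ₄ _ =>
        term_integrable hmeas hz4 (A τ₁ τ₂) (A τ₃ τ₄) τ₁ τ₂ τ₃ τ₄)]
    refine Finset.sum_congr rfl fun τ₂ _ => ?_
    rw [integral_finset_sum _ (fun τ₃ _ => integrable_finset_sum _ fun τ₄ _ =>
      term_integrable hmeas hz4 (A τ₁ τ₂) (A τ₃ τ₄) τ₁ τ₂ τ₃ τ₄)]
    refine Finset.sum_congr rfl fun τ₃ _ => ?_
    rw [integral_finset_sum _ (fun τ₄ _ =>
      term_integrable hmeas hz4 (A τ₁ τ₂) (A τ₃ τ₄) τ₁ τ₂ τ₃ τ₄)]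
  calc ∑ τ₁ ∈ Finset.Icc t₀ t,
        ∫ ω, (∑ τ₂ ∈ Finset.Icc t₀ t, ∑ τ₃ ∈ Finset.Icc t₀ t, ∑ τ₄ ∈ Finset.Icc t₀ t,
          ⟪bavg z τ₁ ω, A τ₁ τ₂ (bavg z τ₂ ω)⟫ * ⟪bavg z τ₃ ω, A τ₃ τ₄ (bavg z τ₄ ω)⟫) ∂P
      = ∑ τ₁ ∈ Finset.Icc t₀ t, ∑ τ₂ ∈ Finset.Icc t₀ t, ∑ τ₃ ∈ Finset.Icc t₀ t,
          ∑ τ₄ ∈ Finset.Icc t₀ t,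
            ∫ ω, ⟪bavg z τ₁ ω, A τ₁ τ₂ (bavg z τ₂ ω)⟫ *
              ⟪bavg z τ₃ ω, A τ₃ τ₄ (bavg z τ₄ ω)⟫ ∂P :=
        Finset.sum_congr rfl hIswap
    _ ≤ ∑ τ₁ ∈ Finset.Icc t₀ t, ∑ τ₂ ∈ Finset.Icc t₀ t, ∑ τ₃ ∈ Finset.Icc t₀ t,
          ∑ τ₄ ∈ Finset.Icc t₀ t,
            2 * (∫ ω, ‖z 1 ω‖ ^ 4 ∂P) *
              (‖A τ₁ τ₂‖ * ‖A τ₃ τ₄‖ / ((τ₂ : ℝ) * (τ₃ : ℝ)) +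
                ‖A τ₁ τ₂‖ * ‖A τ₃ τ₄‖ / ((τ₂ : ℝ) * (τ₄ : ℝ))) := by
        refine Finset.sum_le_sum fun τ₁ hτ₁ => ?_
        refine Finset.sum_le_sum fun τ₂ hτ₂ => ?_
        refine Finset.sum_le_sum fun τ₃ hτ₃ => ?_
        refine Finset.sum_le_sum fun τ₄ hτ₄ => ?_
        exact key_le hmeas hindep hident hmean hzint hz4 (A τ₁ τ₂) (A τ₃ τ₄) τ₁ τ₂ τ₃ τ₄
          (hm1 τ₁ hτ₁) (hm1 τ₂ hτ₂) (hm1 τ₃ hτ₃) (hm1 τ₄ hτ₄)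
    _ = 2 * (∫ ω, ‖z 1 ω‖ ^ 4 ∂P) *
        ∑ τ₁ ∈ Finset.Icc t₀ t, ∑ τ₂ ∈ Finset.Icc t₀ t,
          ∑ τ₃ ∈ Finset.Icc t₀ t, ∑ τ₄ ∈ Finset.Icc t₀ t,
            (‖A τ₁ τ₂‖ * ‖A τ₃ τ₄‖ / ((τ₂ : ℝ) * (τ₃ : ℝ)) +
              ‖A τ₁ τ₂‖ * ‖A τ₃ τ₄‖ / ((τ₂ : ℝ) * (τ₄ : ℝ))) := by
        simp only [Finset.mul_sum]
end

section
/- For any positive integer t' ≥ 2, ∑_{t=t'}^∞ (ln(1+t)/(t+1))² ≤ ((ln t')² + 2·ln t' + 2)/t' = ((ln t' + 1)² + 1)/t' ≤ 2·(ln(e·t'))²/t'. -/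
open Real Set

private noncomputable def gfun : ℝ → ℝ := fun x => (Real.log (1 + x) / (1 + x)) ^ 2

private noncomputable def Ffun : ℝ → ℝ :=
  fun x => -(((Real.log (1 + x)) ^ 2 + 2 * Real.log (1 + x) + 2) / (1 + x))

private lemma hF_deriv {x : ℝ} (hx : 0 < 1 + x) : HasDerivAt Ffun (gfun x) x := by
  have hne : (1 + x) ≠ 0 := ne_of_gt hx
  have h1 : HasDerivAt (fun y : ℝ => 1 + y) 1 x := (hasDerivAt_id x).const_add 1
  have hlog : HasDerivAt (fun y : ℝ => Real.log (1 + y)) (1 / (1 + x)) x := h1.log hne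
  have hnum := ((hlog.pow 2).add (hlog.const_mul 2)).add_const 2
  have hdiv := (hnum.div h1 hne).neg
  refine hdiv.congr_deriv ?_
  unfold gfun
  field_simp
  simp only [Pi.add_apply, Pi.pow_apply]
  norm_num

private lemma g_antitone : AntitoneOn gfun (Set.Ici (2 : ℝ)) := by
  intro a ha b hb hab
  simp only [Set.mem_Ici] at ha hb
  have he : Real.exp 1 ≤ 1 + a := by
    have := Real.exp_one_lt_d9
    linarith
  have h1 : Real.log (1 + b) / (1 + b) ≤ Real.log (1 + a) / (1 + a) :=
    Real.log_div_self_antitoneOn (by simp only [Set.mem_Ici]; linarith)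
      (by simp only [Set.mem_Ici]; linarith) (by linarith)
  have h2 : 0 ≤ Real.log (1 + b) / (1 + b) :=
    div_nonneg (Real.log_nonneg (by linarith)) (by linarith)
  unfold gfun
  exact pow_le_pow_left₀ h2 h1 2

private lemma g_nonneg (x : ℝ) : 0 ≤ gfun x := sq_nonneg _

private lemma key (m : ℕ) (hm : 3 ≤ m) (n : ℕ) :
    ∑ i ∈ Finset.range n, gfun ((m : ℝ) + i) ≤
      ((Real.log m) ^ 2 + 2 * Real.log m + 2) / (m : ℝ) := by
  have hm3 : (3 : ℝ) ≤ (m : ℝ) := by exact_mod_cast hm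
  set x₀ : ℝ := (m : ℝ) - 1 with hx₀
  have hx₀2 : (2 : ℝ) ≤ x₀ := by simp only [hx₀]; linarith
  have hanti : AntitoneOn gfun (Icc x₀ (x₀ + n)) :=
    g_antitone.mono (fun y hy => le_trans hx₀2 hy.1)
  have hsum : (∑ i ∈ Finset.range n, gfun (x₀ + (i + 1 : ℕ))) ≤ ∫ x in x₀..x₀ + n, gfun x :=
    hanti.sum_le_integral
  have hint : (∫ x in x₀..x₀ + n, gfun x) = Ffun (x₀ + n) - Ffun x₀ := by
    apply intervalIntegral.integral_eq_sub_of_hasDerivAt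
    · intro x hx
      rw [uIcc_of_le (le_add_of_nonneg_right (Nat.cast_nonneg n))] at hx
      exact hF_deriv (by linarith [hx.1])
    · apply AntitoneOn.intervalIntegrable
      rwa [uIcc_of_le (le_add_of_nonneg_right (Nat.cast_nonneg n))]
  have hFle : Ffun (x₀ + n) ≤ 0 := by
    unfold Ffun
    have h1 : (0:ℝ) < 1 + (x₀ + n) := by positivity
    have h2 : (0:ℝ) ≤ Real.log (1 + (x₀ + n)) := Real.log_nonneg (by linarith)
    have h3 : (0:ℝ) ≤ ((Real.log (1 + (x₀ + n))) ^ 2 + 2 * Real.log (1 + (x₀ + n)) + 2)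
        / (1 + (x₀ + n)) := by positivity
    linarith
  have hF0 : -Ffun x₀ = ((Real.log m) ^ 2 + 2 * Real.log m + 2) / (m : ℝ) := by
    unfold Ffun
    have h : 1 + x₀ = (m : ℝ) := by rw [hx₀]; ring
    rw [h, neg_neg]
  calc ∑ i ∈ Finset.range n, gfun ((m : ℝ) + i)
      = ∑ i ∈ Finset.range n, gfun (x₀ + (i + 1 : ℕ)) := by
        apply Finset.sum_congr rfl
        intro i _
        congr 1
        push_cast
        ring
    _ ≤ ∫ x in x₀..x₀ + n, gfun x := hsum
    _ = Ffun (x₀ + n) - Ffun x₀ := hint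
    _ ≤ -Ffun x₀ := by linarith
    _ = _ := hF0

private lemma main_bound (m : ℕ) (hm : 3 ≤ m) :
    ∑' k : ℕ, gfun ((m : ℝ) + k) ≤ ((Real.log m) ^ 2 + 2 * Real.log m + 2) / (m : ℝ) :=
  Real.tsum_le_of_sum_range_le (fun _ => g_nonneg _) (key m hm)

private lemma main_summable (m : ℕ) (hm : 3 ≤ m) :
    Summable (fun k : ℕ => gfun ((m : ℝ) + k)) :=
  summable_of_sum_range_le (fun _ => g_nonneg _) (key m hm)

private lemma log3_lt : Real.log 3 ≤ 1.0987 := by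
  have h12 : (12 : ℝ) * Real.log 3 = Real.log 531441 := by
    rw [show (531441 : ℝ) = 3 ^ 12 by norm_num, Real.log_pow]
    push_cast; ring
  have h19 : Real.log (524288:ℝ) = 19 * Real.log 2 := by
    rw [show (524288:ℝ) = 2 ^ 19 by norm_num, Real.log_pow]
    push_cast; ring
  have hmul : Real.log (531441:ℝ) = Real.log 524288 + Real.log ((531441:ℝ) / 524288) := by
    rw [← Real.log_mul (by norm_num) (by norm_num)]
    norm_num
  have hsmall : Real.log (531441 / 524288 : ℝ) ≤ 531441 / 524288 - 1 :=
    Real.log_le_sub_one_of_pos (by norm_num)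
  have h2 := Real.log_two_lt_d9
  nlinarith

theorem stmt12 (t' : ℕ) (ht : 2 ≤ t') :
    (∑' k : ℕ, (Real.log (1 + ((t' : ℝ) + (k : ℝ))) / (((t' : ℝ) + (k : ℝ)) + 1)) ^ 2 ≤
        ((Real.log t') ^ 2 + 2 * Real.log t' + 2) / (t' : ℝ)) ∧
    ((Real.log t') ^ 2 + 2 * Real.log t' + 2) / (t' : ℝ) =
      ((Real.log t' + 1) ^ 2 + 1) / (t' : ℝ) ∧
    ((Real.log t' + 1) ^ 2 + 1) / (t' : ℝ) ≤
      2 * (Real.log (Real.exp 1 * (t' : ℝ))) ^ 2 / (t' : ℝ) := by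
  have ht0 : (0 : ℝ) < (t' : ℝ) := by positivity
  have ht1 : (1 : ℝ) ≤ (t' : ℝ) := by exact_mod_cast Nat.one_le_of_lt ht
  have hlogt : (0 : ℝ) ≤ Real.log t' := Real.log_nonneg ht1
  refine ⟨?_, ?_, ?_⟩
  · have hrw : (fun k : ℕ => (Real.log (1 + ((t' : ℝ) + (k : ℝ))) / (((t' : ℝ) + (k : ℝ)) + 1)) ^ 2)
        = fun k : ℕ => gfun ((t' : ℝ) + k) := by
      funext k
      unfold gfun
      ring_nf
    rw [hrw]
    rcases Nat.lt_or_ge t' 3 with h3 | h3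
    · have ht2 : t' = 2 := by omega
      subst ht2
      have hs4 : Summable (fun k : ℕ => gfun ((4:ℝ) + k)) := by
        have := main_summable 4 (by norm_num)
        simpa using this
      have h4 : ∑' k : ℕ, gfun ((4:ℝ) + k) ≤ ((Real.log 4) ^ 2 + 2 * Real.log 4 + 2) / (4 : ℝ) := by
        have := main_bound 4 (by norm_num)
        simpa using this
      have hc23 : (fun n : ℕ => gfun (((2:ℕ):ℝ) + ↑(n + 2))) = fun n : ℕ => gfun ((4:ℝ) + n) := by
        funext n; congr 1; push_cast; ring
      have hs2 : Summable (fun k : ℕ => gfun (((2:ℕ):ℝ) + k)) := by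
        rw [← summable_nat_add_iff 2, hc23]; exact hs4
      have hc13 : (fun n : ℕ => gfun ((3:ℝ) + ↑(n + 1))) = fun n : ℕ => gfun ((4:ℝ) + n) := by
        funext n; congr 1; push_cast; ring
      have hs3 : Summable (fun k : ℕ => gfun ((3:ℝ) + k)) := by
        rw [← summable_nat_add_iff 1, hc13]; exact hs4
      have e1 : ∑' k : ℕ, gfun (((2:ℕ):ℝ) + k) = gfun 2 + ∑' k : ℕ, gfun ((3:ℝ) + k) := by
        rw [Summable.tsum_eq_zero_add hs2]
        congr 1
        · norm_num
        · apply tsum_congr; intro n; congr 1; push_cast; ring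
      have e2 : ∑' k : ℕ, gfun ((3:ℝ) + k) = gfun 3 + ∑' k : ℕ, gfun ((4:ℝ) + k) := by
        rw [Summable.tsum_eq_zero_add hs3]
        congr 1
        · norm_num
        · apply tsum_congr; intro n; congr 1; push_cast; ring
      rw [e1, e2]
      have hg2 : gfun 2 = (Real.log 3 / 3) ^ 2 := by unfold gfun; norm_num
      have hg3 : gfun 3 = (Real.log 4 / 4) ^ 2 := by unfold gfun; norm_num
      have hlog4 : Real.log 4 = 2 * Real.log 2 := by
        rw [show (4:ℝ) = 2 ^ 2 by norm_num, Real.log_pow]; push_cast; ring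
      have hL2u := Real.log_two_lt_d9
      have hL2l := Real.log_two_gt_d9
      have hL3 := log3_lt
      have hL3p : (0:ℝ) ≤ Real.log 3 := Real.log_nonneg (by norm_num)
      rw [hlog4] at h4
      have hcast : ((2:ℕ):ℝ) = 2 := by norm_num
      rw [hcast, hg2, hg3, hlog4]
      nlinarith [h4, hL3, hL3p, hL2u, hL2l]
    · exact main_bound t' h3
  · congr 1
    ring
  · have hlog : Real.log (Real.exp 1 * (t' : ℝ)) = 1 + Real.log t' := by
      rw [Real.log_mul (Real.exp_pos 1).ne' ht0.ne', Real.log_exp]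
    rw [hlog]
    gcongr ?_ / _
    nlinarith [sq_nonneg (Real.log t')]
end
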